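/- Assume W(L^∞,Y) is right translation invariant and also left translation invariant (each L_x acts boundedly on W(L^∞,Y)). Then for every well-spread family X=(x_i)_{i∈I}, the sequence space Y_d(X) is continuously embedded into the weighted space ℓ^∞_{1/r}, where r(i) := |||L_{x_i^{-1}} | W(L^∞,Y)||| is the operator quasi-norm of the left translation; that is, there is a constant C with sup_{i∈I} |λ_i| / r(i) ≤ C ‖(λ_i)|Y_d(X)‖ for all (λ_i)∈Y_d(X). -/

import Mathlib

open MeasureTheory Topology ENNReal NNReal Set Filter Pointwise

noncomputable section

namespace WienerAmalgam

variable {G : Type*} [Group G] [TopologicalSpace G] [IsTopologicalGroup G]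
  [LocallyCompactSpace G] [MeasurableSpace G] [BorelSpace G]

/-- Left translation `(L_x F)(y) = F (x⁻¹ y)`. -/
def Ltrans (x : G) (F : G → ℂ) : G → ℂ := fun y => F (x⁻¹ * y)

/-- Right translation `(R_x F)(y) = F (y x)`. -/
def Rtrans (x : G) (F : G → ℂ) : G → ℂ := fun y => F (y * x)

/-- `Q` is a relatively compact neighbourhood of the identity. -/
def IsRCNbhd (Q : Set G) : Prop := Q ∈ 𝓝 (1 : G) ∧ IsCompact (closure Q)

/-- A solid quasi-Banach function space on `G` (with respect to the measure `μ`),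
represented by its extended-real-valued quasi-norm functional `N`; membership of `F` in the
space is expressed by `N F < ⊤` (together with a.e.-measurability of `F`).  The quasi-norm is a
`p`-norm (`0 < p ≤ 1`), the space is solid, and it contains the characteristic function of every
compact set. -/
structure SolidQF (μ : Measure G) where
  N : (G → ℂ) → ℝ≥0∞
  p : ℝ
  p_pos : 0 < p
  p_le_one : p ≤ 1
  norm_smul : ∀ (c : ℂ) (F : G → ℂ), N (fun x => c * F x) = (‖c‖₊ : ℝ≥0∞) * N F
  ptriangle : ∀ F G' : G → ℂ, N (F + G') ^ p ≤ N F ^ p + N G' ^ p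
  solid : ∀ F G' : G → ℂ, AEMeasurable G' μ → (∀ᵐ x ∂μ, ‖G' x‖ ≤ ‖F x‖) → N G' ≤ N F
  definite : ∀ F : G → ℂ, AEMeasurable F μ → N F = 0 → F =ᵐ[μ] 0
  compact_finite : ∀ K : Set G, IsCompact K → N (K.indicator fun _ => 1) < ⊤

/-- Interpret a nonnegative extended-real-valued function as a complex-valued one. -/
def toC (f : G → ℝ≥0∞) : G → ℂ := fun x => ((f x).toReal : ℂ)

/-- The control function `K(F,Q,L^∞)(x) = ‖(L_x χ_Q) F‖_∞`. -/
def Kinf (μ : Measure G) (Q : Set G) (F : G → ℂ) : G → ℝ≥0∞ :=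
  fun x => eLpNorm ((x • Q).indicator F) ⊤ μ

/-- The control function `K(F,Q,L^1)(x) = ‖(L_x χ_Q) F‖_1`. -/
def Kone (μ : Measure G) (Q : Set G) (F : G → ℂ) : G → ℝ≥0∞ :=
  fun x => ∫⁻ z in x • Q, ‖F z‖₊ ∂μ

variable {μ : Measure G}

/-- The quasi-norm of the Wiener amalgam space `W(L^∞, Y, Q)`. -/
def WnormInf (Y : SolidQF μ) (Q : Set G) (F : G → ℂ) : ℝ≥0∞ := Y.N (toC (Kinf μ Q F))

/-- Membership in the Wiener amalgam space `W(L^∞, Y, Q)`. -/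
def MemWInf (Y : SolidQF μ) (Q : Set G) (F : G → ℂ) : Prop :=
  AEMeasurable F μ ∧ (∀ x, Kinf μ Q F x < ⊤) ∧ WnormInf Y Q F < ⊤

/-- The quasi-norm of the Wiener amalgam space `W(L^1, Y, Q)`. -/
def WnormOne (Y : SolidQF μ) (Q : Set G) (F : G → ℂ) : ℝ≥0∞ := Y.N (toC (Kone μ Q F))

/-- Membership in the Wiener amalgam space `W(L^1, Y, Q)`. -/
def MemWOne (Y : SolidQF μ) (Q : Set G) (F : G → ℂ) : Prop :=
  AEMeasurable F μ ∧ (∀ x, Kone μ Q F x < ⊤) ∧ WnormOne Y Q F < ⊤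

/-- The total variation measure `|c|` of a complex measure (up to an equivalent norm, realized
as `|Re c| + |Im c|`). -/
def cvar (c : ComplexMeasure G) : Measure G :=
  (ComplexMeasure.re c).totalVariation + (ComplexMeasure.im c).totalVariation

/-- The control function `K(c,Q,M)(x) = |c|(xQ)` of a complex measure. -/
def KM (Q : Set G) (c : ComplexMeasure G) : G → ℝ≥0∞ := fun x => cvar c (x • Q)

/-- The quasi-norm of the Wiener amalgam space `W(M, Y, Q)`. -/
def WnormM (Y : SolidQF μ) (Q : Set G) (c : ComplexMeasure G) : ℝ≥0∞ := Y.N (toC (KM Q c))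

/-- Membership in the Wiener amalgam space `W(M, Y, Q)`. -/
def MemWM (Y : SolidQF μ) (Q : Set G) (c : ComplexMeasure G) : Prop :=
  (∀ x, KM Q c x < ⊤) ∧ WnormM Y Q c < ⊤

/-- The right translation `A_x` of a complex measure, `A_x c (k) = c (R_x k)`,
i.e. `(A_x c)(E) = c (E x⁻¹)`. -/
def Atrans (x : G) (c : ComplexMeasure G) : ComplexMeasure G :=
  VectorMeasure.map c (fun z => z * x)

/-- The left translation `L_x` of a complex measure, `(L_x c)(E) = c (x⁻¹ E)`. -/
def Lmeas (x : G) (c : ComplexMeasure G) : ComplexMeasure G :=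
  VectorMeasure.map c (fun z => x * z)

/-- The integral of a function against a complex measure, via Jordan decompositions of the
real and imaginary parts. -/
def cint (c : ComplexMeasure G) (f : G → ℂ) : ℂ :=
  ((∫ y, f y ∂(ComplexMeasure.re c).toJordanDecomposition.posPart) -
      (∫ y, f y ∂(ComplexMeasure.re c).toJordanDecomposition.negPart)) +
    Complex.I * ((∫ y, f y ∂(ComplexMeasure.im c).toJordanDecomposition.posPart) -
      (∫ y, f y ∂(ComplexMeasure.im c).toJordanDecomposition.negPart))

/-- Convolution `c ∗ F` of a complex measure with a function,
`(c ∗ F)(z) = ∫ F(y⁻¹ z) dc(y)`. -/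
def convM (c : ComplexMeasure G) (F : G → ℂ) : G → ℂ := fun z => cint c (fun y => F (y⁻¹ * z))

/-- Convolution of two functions, `(F ∗ G)(z) = ∫ F(y) G(y⁻¹ z) dμ(y)`. -/
def fconv (μ : Measure G) (F G' : G → ℂ) : G → ℂ := fun z => ∫ y, F y * G' (y⁻¹ * z) ∂μ

section Sequence

variable {ι : Type*}

/-- A family of points of `G` is relatively separated if, for every compact `K`, the translates
`x_i K` have uniformly bounded overlaps. -/
def RelSeparated (X : ι → G) : Prop :=
  ∀ K : Set G, IsCompact K → ∃ C : ℕ, ∀ j : ι, {i : ι | (X i • K ∩ X j • K).Nonempty}.encard ≤ C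

/-- `X` is `V`-dense if the translates `x_i V` cover `G`. -/
def VDense (X : ι → G) (V : Set G) : Prop := ∀ g : G, ∃ i, g ∈ X i • V

/-- A well-spread family: relatively separated and `V`-dense for some relatively compact
neighbourhood `V` of the identity. -/
def WellSpread (X : ι → G) : Prop :=
  RelSeparated X ∧ ∃ V : Set G, IsRCNbhd V ∧ VDense X V

/-- The function `Σ_i |λ_i| χ_{x_i U}`. -/
def sumInd (X : ι → G) (U : Set G) (lam : ι → ℂ) : G → ℝ≥0∞ :=
  fun z => ∑' i, (X i • U).indicator (fun _ => (‖lam i‖₊ : ℝ≥0∞)) z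

/-- The quasi-norm of the sequence space `Y_d(X, U)`:
`‖(λ_i)‖ = ‖Σ_i |λ_i| χ_{x_i U}‖_Y`. -/
def YdNorm (Y : SolidQF μ) (X : ι → G) (U : Set G) (lam : ι → ℂ) : ℝ≥0∞ :=
  Y.N (toC (sumInd X U lam))

/-- A bounded uniform partition of unity of size `U` associated with the well-spread family
`X`. -/
structure IsBUPU (ψ : ι → G → ℝ) (X : ι → G) (U : Set G) : Prop where
  cont : ∀ i, Continuous (ψ i)
  nonneg : ∀ i x, 0 ≤ ψ i x
  le_one : ∀ i x, ψ i x ≤ 1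
  sum_one : ∀ x : G, ∑' i, ψ i x = 1
  support_subset : ∀ i, Function.support (ψ i) ⊆ X i • U
  wellspread : WellSpread X

end Sequence

/-- The operator quasi-norm of a map `T` with respect to the quasi-norm functional `N`. -/
def opEN {α : Type*} (T : α → α) (N : α → ℝ≥0∞) : ℝ≥0∞ :=
  sInf {C : ℝ≥0∞ | ∀ a, N (T a) ≤ C * N a}

/-- `W(L^∞, Y)` is right translation invariant: every right translation acts boundedly on
`W(L^∞, Y, Q)` for every relatively compact neighbourhood `Q` of the identity. -/
def WInfRTI (Y : SolidQF μ) : Prop :=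
  ∀ Q : Set G, IsRCNbhd Q → ∀ y : G, ∃ C : ℝ≥0∞, C ≠ ⊤ ∧
    ∀ F : G → ℂ, WnormInf Y Q (Rtrans y F) ≤ C * WnormInf Y Q F

/-- `W(L^∞, Y)` is left translation invariant. -/
def WInfLTI (Y : SolidQF μ) : Prop :=
  ∀ Q : Set G, IsRCNbhd Q → ∀ y : G, ∃ C : ℝ≥0∞, C ≠ ⊤ ∧
    ∀ F : G → ℂ, WnormInf Y Q (Ltrans y F) ≤ C * WnormInf Y Q F

/-- The quasi-norm of the Wiener amalgam space `W(L^∞, L^p_w, Q)` with weighted Lebesgue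
global component:  `‖ K(F,Q,L^∞) · w ‖_p`. -/
def WnormInfLpw (μ : Measure G) (Q : Set G) (w : G → ℝ≥0∞) (p : ℝ) (F : G → ℂ) : ℝ≥0∞ :=
  (∫⁻ x, (Kinf μ Q F x * w x) ^ p ∂μ) ^ (1 / p)

/-- Membership in `W(L^∞, L^p_w, Q)`. -/
def MemWInfLpw (μ : Measure G) (Q : Set G) (w : G → ℝ≥0∞) (p : ℝ) (F : G → ℂ) : Prop :=
  AEMeasurable F μ ∧ (∀ x, Kinf μ Q F x < ⊤) ∧ WnormInfLpw μ Q w p F < ⊤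

/-!
Fix an open neighbourhood `T` of `1` with compact closure and `T * T⁻¹ ⊆ U`, and a continuous
bump `Φ` with `Φ 1 = 1` and `‖Φ‖ ≤ 1`, supported in `T`. Since `Φ = L_{x⁻¹} (L_x Φ)`, we get
`‖Φ‖_{W(Q)} ≤ r(x) ‖L_x Φ‖_{W(Q)}`. Covering `Q` by finitely many right translates `T y`, right
translation invariance and the `p`-triangle inequality give `‖L_x Φ‖_{W(Q)} ≤ B ‖L_x Φ‖_{W(T)}`
with `B` independent of `x`, and `K(L_x Φ, T, L^∞) ≤ χ_{x T T⁻¹}`. Finally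
`|λ_i| χ_{x_i T T⁻¹} ≤ Σ_j |λ_j| χ_{x_j U}`, so `|λ_i| ‖Φ‖_{W(Q)} ≤ B r(i) ‖(λ_j)|Y_d‖`,
where `‖Φ‖_{W(Q)}` is positive and finite.

Solidity of `Y` only compares with measurable functions. For continuous `F`, `K(F,Q,L^∞)(z)` is
the supremum of `‖F (z q)‖` over the support of `μ|_Q`, hence lower semicontinuous in `z`.
-/

lemma interior_subset_support_restrict {X : Type*} [TopologicalSpace X] [MeasurableSpace X]
    [OpensMeasurableSpace X] {μ : Measure X} [μ.IsOpenPosMeasure] (s : Set X) :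
    interior s ⊆ (μ.restrict s).support := fun _ hx =>
  Measure.interior_inter_support ⟨hx, by simp [Measure.support_eq_univ]⟩

lemma exists_continuous_bump {X : Type*} [TopologicalSpace X] [RegularSpace X]
    [LocallyCompactSpace X] {T : Set X} (hT : IsOpen T) {a : X} (ha : a ∈ T) :
    ∃ Φ : X → ℂ, Continuous Φ ∧ Φ a = 1 ∧ (∀ x, ‖Φ x‖ₑ ≤ 1) ∧ ∀ x, Φ x ≠ 0 → x ∈ T := by
  obtain ⟨f, hf1, hf0, -, hf01⟩ := exists_continuous_one_zero_of_isCompact isCompact_singleton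
    hT.isClosed_compl (disjoint_singleton_left.2 fun h => h ha)
  refine ⟨fun x => (f x : ℂ), by fun_prop, by simp [hf1 rfl], fun x => ?_,
    fun x hx => by_contra fun hxT => hx (by simp [hf0 hxT])⟩
  simpa [← ofReal_norm, abs_of_nonneg (hf01 x).1] using (hf01 x).2

lemma le_opEN_mul {α : Type*} {T : α → α} {N : α → ℝ≥0∞} {a : α} (h0 : N a ≠ 0)
    (htop : N a ≠ ⊤) : N (T a) ≤ opEN T N * N a := by
  rw [← ENNReal.div_le_iff h0 htop]
  exact le_sInf fun C hC => (ENNReal.div_le_iff h0 htop).2 (hC a)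

section Kinf

variable {G : Type*} [Group G] [MeasurableSpace G] {μ : Measure G} {Q : Set G} {F : G → ℂ}

lemma kinf_le_of_forall_le {z : G} {s : ℝ≥0∞} (h : ∀ q ∈ Q, ‖F (z * q)‖ₑ ≤ s) :
    Kinf μ Q F z ≤ s := by
  rw [Kinf, eLpNorm_exponent_top]
  refine essSup_le_of_ae_le s (.of_forall fun w => ?_)
  by_cases hw : w ∈ z • Q
  · obtain ⟨q, hq, rfl⟩ := hw
    simp only [indicator_of_mem (smul_mem_smul_set hq)]
    exact h q hq
  · simp [indicator_of_notMem hw]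

variable [TopologicalSpace G] [IsTopologicalGroup G] [BorelSpace G]

lemma le_kinf_of_mem_support [μ.IsMulLeftInvariant] (hF : Continuous F) {q : G}
    (hq : q ∈ (μ.restrict Q).support) (z : G) : ‖F (z * q)‖ₑ ≤ Kinf μ Q F z := by
  by_contra! hlt
  set O : Set G := {w | Kinf μ Q F z < ‖F (z * w)‖ₑ}
  have hO : IsOpen O := isOpen_lt continuous_const (by fun_prop)
  have hpos : 0 < μ (O ∩ Q) := by
    rw [← Measure.restrict_apply hO.measurableSet]
    exact (Measure.mem_support_iff_forall q).1 hq O (hO.mem_nhds hlt)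
  have hsub : z • (O ∩ Q) ⊆ {w | Kinf μ Q F z < ‖(z • Q).indicator F w‖ₑ} := by
    rintro _ ⟨q', ⟨hq'O, hq'Q⟩, rfl⟩
    rw [mem_ofPred_eq, indicator_of_mem (smul_mem_smul_set hq'Q)]
    exact hq'O
  have hnull : μ {w | Kinf μ Q F z < ‖(z • Q).indicator F w‖ₑ} = 0 := by
    have := enorm_ae_le_eLpNormEssSup ((z • Q).indicator F) μ
    simpa [ae_iff, Kinf] using this
  rw [← measure_smul μ z] at hpos
  exact hpos.ne' (measure_mono_null hsub hnull)

variable [LocallyCompactSpace G] [μ.IsHaarMeasure]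

lemma restrict_eq_haarScalarFactor_smul (hQ : IsCompact (closure Q)) :
    μ.restrict Q = μ.haarScalarFactor Measure.haar • Measure.haar.restrict Q := by
  ext A hA
  rw [Measure.restrict_apply hA, Measure.smul_apply, Measure.restrict_apply hA]
  exact Measure.measure_isMulInvariant_eq_smul_of_isCompact_closure μ Measure.haar
    (hQ.of_isClosed_subset isClosed_closure (closure_mono inter_subset_right))

/-- A Haar measure need not be inner regular, but on a relatively compact set it is a multiple of
`Measure.haar`, which is. -/
lemma ae_restrict_mem_support (hQ : IsCompact (closure Q)) :
    ∀ᵐ q ∂μ.restrict Q, q ∈ (μ.restrict Q).support := by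
  have : IsFiniteMeasure (μ.restrict Q) :=
    isFiniteMeasure_restrict.2 ((measure_mono subset_closure).trans_lt hQ.measure_lt_top).ne
  have : (μ.restrict Q).InnerRegularCompactLTTop := by
    rw [restrict_eq_haarScalarFactor_smul hQ]
    infer_instance
  exact Measure.support_mem_ae_of_innerRegular

lemma kinf_le_iSup_support (hQ : IsCompact (closure Q)) (z : G) :
    Kinf μ Q F z ≤ ⨆ q ∈ (μ.restrict Q).support, ‖F (z * q)‖ₑ := by
  set S := (μ.restrict Q).support
  have hnull : μ (z • (Sᶜ ∩ Q)) = 0 := by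
    rw [measure_smul, ← Measure.restrict_apply Measure.isOpen_compl_support.measurableSet]
    exact ae_restrict_mem_support hQ
  rw [Kinf, eLpNorm_exponent_top]
  refine essSup_le_of_ae_le _ (ae_iff.2 (measure_mono_null (fun w hw => ?_) hnull))
  by_cases hwQ : w ∈ z • Q
  · obtain ⟨q, hq, rfl⟩ := hwQ
    refine smul_mem_smul_set ⟨fun hqS => hw ?_, hq⟩
    simp only [indicator_of_mem (smul_mem_smul_set hq)]
    exact le_biSup (fun q => ‖F (z * q)‖ₑ) hqS
  · exact absurd (by simp [indicator_of_notMem hwQ]) hw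

lemma kinf_eq_iSup_support (hF : Continuous F) (hQ : IsCompact (closure Q)) (z : G) :
    Kinf μ Q F z = ⨆ q ∈ (μ.restrict Q).support, ‖F (z * q)‖ₑ :=
  le_antisymm (kinf_le_iSup_support hQ z) (iSup₂_le fun _ hq => le_kinf_of_mem_support hF hq z)

lemma measurable_kinf (hF : Continuous F) (hQ : IsCompact (closure Q)) :
    Measurable (Kinf μ Q F) := by
  rw [funext (kinf_eq_iSup_support hF hQ)]
  exact (lowerSemicontinuous_biSup fun q _ =>
    (by fun_prop : Continuous fun z => ‖F (z * q)‖ₑ).lowerSemicontinuous).measurable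

end Kinf

section ToC

variable {G : Type*}

lemma norm_toC (f : G → ℝ≥0∞) (z : G) : ‖toC f z‖ = (f z).toReal := by
  simp [toC]

lemma measurable_toC [MeasurableSpace G] {f : G → ℝ≥0∞} (hf : Measurable f) : Measurable (toC f) :=
  Complex.measurable_ofReal.comp (ENNReal.measurable_toReal.comp hf)

lemma norm_finset_sum_toC {κ : Type*} {t : Finset κ} {f : κ → G → ℝ≥0∞} {z : G}
    (hf : ∀ k ∈ t, f k z ≠ ⊤) : ‖∑ k ∈ t, toC (f k) z‖ = (∑ k ∈ t, f k z).toReal := by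
  simp only [toC, ← Complex.ofReal_sum, Complex.norm_real, ENNReal.toReal_sum hf]
  exact abs_of_nonneg (Finset.sum_nonneg fun _ _ => ENNReal.toReal_nonneg)

end ToC

namespace SolidQF

variable {G : Type*} [TopologicalSpace G] [MeasurableSpace G] {μ : Measure G} (Y : SolidQF μ)

lemma N_zero : Y.N 0 = 0 := by
  have h := Y.norm_smul 0 0
  simp only [zero_mul, nnnorm_zero, ENNReal.coe_zero] at h
  exact h

lemma N_finset_sum_rpow_le {κ : Type*} (g : κ → G → ℂ) (t : Finset κ) :
    Y.N (∑ k ∈ t, g k) ^ Y.p ≤ ∑ k ∈ t, Y.N (g k) ^ Y.p := by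
  classical
  induction t using Finset.induction_on with
  | empty => simp [N_zero, ENNReal.zero_rpow_of_pos Y.p_pos]
  | insert a t ha ih =>
    rw [Finset.sum_insert ha, Finset.sum_insert ha]
    exact (Y.ptriangle _ _).trans (add_le_add le_rfl ih)

lemma N_ne_zero_of_continuous [OpensMeasurableSpace G] [μ.IsOpenPosMeasure] {F : G → ℂ}
    (hF : Continuous F) (hF0 : F ≠ 0) : Y.N F ≠ 0 := fun h =>
  hF0 ((Continuous.ae_eq_iff_eq μ hF continuous_const).1 (Y.definite F hF.aemeasurable h))

end SolidQF

section WnormInf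

variable {G : Type*} [Group G] [TopologicalSpace G] [MeasurableSpace G] {μ : Measure G}
  (Y : SolidQF μ) {Q : Set G} {F : G → ℂ}

lemma wnormInf_le_mul_N_indicator (hmeas : Measurable (Kinf μ Q F)) {M : ℝ≥0}
    (hFM : ∀ w, ‖F w‖ₑ ≤ M) {K : Set G} (hK : ∀ z, ∀ q ∈ Q, F (z * q) ≠ 0 → z ∈ K) :
    WnormInf Y Q F ≤ M * Y.N (K.indicator fun _ => 1) := by
  calc WnormInf Y Q F ≤ Y.N (fun z => (M : ℂ) * K.indicator (fun _ => 1) z) := by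
        refine Y.solid _ _ (measurable_toC hmeas).aemeasurable (.of_forall fun z => ?_)
        rw [norm_toC]
        by_cases hz : z ∈ K
        · simpa [indicator_of_mem hz] using
            ENNReal.toReal_mono coe_ne_top (kinf_le_of_forall_le fun q _ => hFM (z * q))
        · have h0 : Kinf μ Q F z = 0 := nonpos_iff_eq_zero.1 <| kinf_le_of_forall_le fun q hq => by
            simp only [nonpos_iff_eq_zero, enorm_eq_zero]
            exact not_not.1 fun h => hz (hK z q hq h)
          simp [h0, indicator_of_notMem hz]
    _ = M * Y.N (K.indicator fun _ => 1) := by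
        rw [Y.norm_smul]
        simp

variable [IsTopologicalGroup G] [BorelSpace G]

lemma SolidQF.N_le_wnormInf [μ.IsMulLeftInvariant] [μ.IsOpenPosMeasure] (hF : Continuous F)
    {M : ℝ≥0} (hFM : ∀ w, ‖F w‖ₑ ≤ M) (hQ : Q ∈ 𝓝 1) : Y.N F ≤ WnormInf Y Q F := by
  refine Y.solid _ _ hF.aemeasurable (.of_forall fun z => ?_)
  have h1 : (1 : G) ∈ (μ.restrict Q).support :=
    interior_subset_support_restrict Q (mem_interior_iff_mem_nhds.2 hQ)
  have hz := le_kinf_of_mem_support hF h1 z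
  rw [mul_one] at hz
  rw [norm_toC, ← toReal_enorm]
  exact ENNReal.toReal_mono (ne_top_of_le_ne_top coe_ne_top
    (kinf_le_of_forall_le fun q _ => hFM (z * q))) hz

lemma wnormInf_ne_zero [μ.IsMulLeftInvariant] [μ.IsOpenPosMeasure] (hF : Continuous F)
    (hF0 : F ≠ 0) {M : ℝ≥0} (hFM : ∀ w, ‖F w‖ₑ ≤ M) (hQ : Q ∈ 𝓝 1) : WnormInf Y Q F ≠ 0 :=
  fun h => Y.N_ne_zero_of_continuous hF hF0 (le_zero_iff.1 (h ▸ Y.N_le_wnormInf hF hFM hQ))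

lemma kinf_le_sum_kinf_rtrans [μ.IsMulLeftInvariant] [μ.IsOpenPosMeasure] (hF : Continuous F)
    {T : Set G} (hT : IsOpen T) {t : Finset G} (hQt : Q ⊆ ⋃ y ∈ t, T * {y}) (z : G) :
    Kinf μ Q F z ≤ ∑ y ∈ t, Kinf μ T (Rtrans y F) z := by
  refine kinf_le_of_forall_le fun q hq => ?_
  obtain ⟨y, hy, hqy⟩ : ∃ y ∈ t, q * y⁻¹ ∈ T := by simpa using hQt hq
  have hqyT : q * y⁻¹ ∈ (μ.restrict T).support :=
    interior_subset_support_restrict T (by rwa [hT.interior_eq])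
  calc ‖F (z * q)‖ₑ = ‖Rtrans y F (z * (q * y⁻¹))‖ₑ := by simp [Rtrans, mul_assoc]
    _ ≤ Kinf μ T (Rtrans y F) z := le_kinf_of_mem_support (by unfold Rtrans; fun_prop) hqyT z
    _ ≤ ∑ y ∈ t, Kinf μ T (Rtrans y F) z :=
      Finset.single_le_sum (f := fun y => Kinf μ T (Rtrans y F) z) (fun _ _ => zero_le) hy

variable [LocallyCompactSpace G] [μ.IsHaarMeasure]

lemma wnormInf_ne_top (hF : Continuous F) {M : ℝ≥0} (hFM : ∀ w, ‖F w‖ₑ ≤ M)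
    (hQ : IsCompact (closure Q)) {K : Set G} (hK : IsCompact K)
    (hFK : ∀ z, ∀ q ∈ Q, F (z * q) ≠ 0 → z ∈ K) : WnormInf Y Q F ≠ ⊤ :=
  ne_top_of_le_ne_top (mul_ne_top coe_ne_top (Y.compact_finite K hK).ne)
    (wnormInf_le_mul_N_indicator Y (measurable_kinf hF hQ) hFM hFK)

lemma wnormInf_le_of_subset_iUnion (hF : Continuous F) {M : ℝ≥0} (hFM : ∀ w, ‖F w‖ₑ ≤ M)
    (hQ : IsCompact (closure Q)) {T : Set G} (hT : IsOpen T) {t : Finset G}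
    (hQt : Q ⊆ ⋃ y ∈ t, T * {y}) {C : G → ℝ≥0∞}
    (hC : ∀ y ∈ t, WnormInf Y T (Rtrans y F) ≤ C y * WnormInf Y T F) :
    WnormInf Y Q F ≤ (∑ y ∈ t, C y ^ Y.p) ^ (1 / Y.p) * WnormInf Y T F := by
  have hfin : ∀ z, ∀ y ∈ t, Kinf μ T (Rtrans y F) z ≠ ⊤ := fun z y _ =>
    ne_top_of_le_ne_top coe_ne_top (kinf_le_of_forall_le fun q _ => hFM _)
  have hsum : WnormInf Y Q F ≤ Y.N (∑ y ∈ t, toC (Kinf μ T (Rtrans y F))) := by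
    refine Y.solid _ _ (measurable_toC (measurable_kinf hF hQ)).aemeasurable
      (.of_forall fun z => ?_)
    rw [norm_toC, Finset.sum_apply, norm_finset_sum_toC (hfin z)]
    exact ENNReal.toReal_mono (ENNReal.sum_ne_top.2 (hfin z))
      (kinf_le_sum_kinf_rtrans hF hT hQt z)
  rw [← ENNReal.rpow_le_rpow_iff Y.p_pos, ENNReal.mul_rpow_of_nonneg _ _ Y.p_pos.le,
    ← ENNReal.rpow_mul, one_div_mul_cancel Y.p_pos.ne', ENNReal.rpow_one, Finset.sum_mul]
  calc WnormInf Y Q F ^ Y.p ≤ Y.N (∑ y ∈ t, toC (Kinf μ T (Rtrans y F))) ^ Y.p :=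
        ENNReal.rpow_le_rpow hsum Y.p_pos.le
    _ ≤ ∑ y ∈ t, WnormInf Y T (Rtrans y F) ^ Y.p := Y.N_finset_sum_rpow_le _ t
    _ ≤ ∑ y ∈ t, C y ^ Y.p * WnormInf Y T F ^ Y.p := Finset.sum_le_sum fun y hy =>
        (ENNReal.rpow_le_rpow (hC y hy) Y.p_pos.le).trans_eq
          (ENNReal.mul_rpow_of_nonneg _ _ Y.p_pos.le)

end WnormInf

section Sequence

variable {G : Type*} [Group G] {ι : Type*} {X : ι → G} {U : Set G}

lemma enorm_le_sumInd (lam : ι → ℂ) {i : ι} {z : G} (hz : z ∈ X i • U) :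
    ‖lam i‖ₑ ≤ sumInd X U lam z :=
  le_of_eq_of_le (indicator_of_mem hz (fun _ => (‖lam i‖₊ : ℝ≥0∞))).symm
    (ENNReal.le_tsum (f := fun j => (X j • U).indicator (fun _ => (‖lam j‖₊ : ℝ≥0∞)) z) i)

variable [TopologicalSpace G]

lemma finite_setOf_mem_smul (hX : RelSeparated X) (hU : IsCompact (closure U)) (z : G) :
    {i | z ∈ X i • U}.Finite := by
  rcases eq_empty_or_nonempty {i | z ∈ X i • U} with h | ⟨j, hj⟩
  · simp [h]
  obtain ⟨n, hn⟩ := hX _ hU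
  refine finite_of_encard_le_coe ((encard_mono fun i hi => ?_).trans (hn j))
  exact ⟨z, smul_set_mono subset_closure hi, smul_set_mono subset_closure hj⟩

/-- `toC` sends `⊤` to `0`, so comparisons with `toC (sumInd X U lam)` need this finiteness. -/
lemma sumInd_ne_top (hX : RelSeparated X) (hU : IsCompact (closure U)) (lam : ι → ℂ) (z : G) :
    sumInd X U lam z ≠ ⊤ := by
  have hfin := finite_setOf_mem_smul hX hU z
  rw [sumInd, tsum_eq_sum (s := hfin.toFinset) fun i hi =>
    indicator_of_notMem (by simpa using hi) _]
  exact ENNReal.sum_ne_top.2 fun i _ => by unfold indicator; split_ifs <;> simp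

lemma enorm_mul_N_indicator_le_ydNorm [MeasurableSpace G] [MeasurableMul G] {μ : Measure G}
    (Y : SolidQF μ) (hX : RelSeparated X) (hU : IsCompact (closure U)) {V : Set G}
    (hV : MeasurableSet V) (hVU : V ⊆ U) (lam : ι → ℂ) (i : ι) :
    ‖lam i‖ₑ * Y.N ((X i • V).indicator fun _ => 1) ≤ YdNorm Y X U lam := by
  rw [enorm_eq_nnnorm, ← Y.norm_smul]
  refine Y.solid _ _ ((measurable_const.indicator (hV.const_smul _)).const_mul _).aemeasurable
    (.of_forall fun z => ?_)
  rw [norm_toC]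
  by_cases hz : z ∈ X i • V
  · rw [indicator_of_mem hz, mul_one, ← toReal_enorm]
    exact ENNReal.toReal_mono (sumInd_ne_top hX hU lam z)
      (enorm_le_sumInd lam (smul_set_mono hVU hz))
  · simp [indicator_of_notMem hz]

end Sequence

section Translation

variable {G : Type*} [Group G]

@[simp]
lemma ltrans_one (F : G → ℂ) : Ltrans 1 F = F :=
  funext fun y => by simp [Ltrans]

@[simp]
lemma ltrans_inv_ltrans (x : G) (F : G → ℂ) : Ltrans x⁻¹ (Ltrans x F) = F :=
  funext fun y => by simp [Ltrans]

lemma continuous_ltrans [TopologicalSpace G] [IsTopologicalGroup G] {F : G → ℂ}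
    (hF : Continuous F) (x : G) : Continuous (Ltrans x F) := by
  unfold Ltrans
  fun_prop

lemma mem_smul_mul_inv_of_ltrans_ne_zero {Φ : G → ℂ} {T S : Set G}
    (hΦT : ∀ w, Φ w ≠ 0 → w ∈ T) {x z q : G} (hq : q ∈ S) (h : Ltrans x Φ (z * q) ≠ 0) :
    z ∈ x • (T * S⁻¹) :=
  ⟨x⁻¹ * (z * q) * q⁻¹, mul_mem_mul (hΦT _ h) (inv_mem_inv.2 hq), by simp [mul_assoc]⟩

end Translation

lemma exists_isOpen_one_mem_mul_inv_subset {G : Type*} [Group G] [TopologicalSpace G]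
    [IsTopologicalGroup G] [LocallyCompactSpace G] {U : Set G} (hU : U ∈ 𝓝 1) :
    ∃ T : Set G, IsOpen T ∧ 1 ∈ T ∧ IsCompact (closure T) ∧ T * T⁻¹ ⊆ U := by
  obtain ⟨S, hSo, hS1, hSU⟩ := exists_open_nhds_one_mul_subset hU
  obtain ⟨K, hK, hK1⟩ := exists_compact_mem_nhds (1 : G)
  refine ⟨S ∩ S⁻¹ ∩ interior K, (hSo.inter hSo.inv).inter isOpen_interior,
    ⟨⟨hS1, by simpa using hS1⟩, mem_interior_iff_mem_nhds.2 hK1⟩,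
    hK.closure_of_subset (inter_subset_right.trans interior_subset), ?_⟩
  exact (mul_subset_mul (inter_subset_left.trans inter_subset_left)
    (inv_subset.2 (inter_subset_left.trans inter_subset_right))).trans hSU

section Bump

variable {G : Type*} [Group G] [TopologicalSpace G] [IsTopologicalGroup G] [MeasurableSpace G]
  [BorelSpace G] {μ : Measure G} (Y : SolidQF μ) {Q T : Set G} {Φ : G → ℂ}

lemma wnormInf_ltrans_ne_zero [μ.IsMulLeftInvariant] [μ.IsOpenPosMeasure] (hΦ : Continuous Φ)
    (hΦ1 : Φ 1 = 1) (hΦle : ∀ w, ‖Φ w‖ₑ ≤ 1) (hQ : Q ∈ 𝓝 1) (x : G) :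
    WnormInf Y Q (Ltrans x Φ) ≠ 0 :=
  wnormInf_ne_zero Y (continuous_ltrans hΦ x) (fun h => by simpa [Ltrans, hΦ1] using congr_fun h x)
    (M := 1) (fun _ => hΦle _) hQ

variable [LocallyCompactSpace G] [μ.IsHaarMeasure]

lemma wnormInf_ltrans_ne_top (hΦ : Continuous Φ) (hΦle : ∀ w, ‖Φ w‖ₑ ≤ 1)
    (hΦT : ∀ w, Φ w ≠ 0 → w ∈ T) (hT : IsCompact (closure T)) (hQ : IsCompact (closure Q))
    (x : G) : WnormInf Y Q (Ltrans x Φ) ≠ ⊤ :=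
  wnormInf_ne_top Y (continuous_ltrans hΦ x) (M := 1) (fun _ => hΦle _) hQ
    ((hT.mul hQ.inv).smul x) fun _ _ hq h =>
      smul_set_mono (mul_subset_mul subset_closure (inv_subset_inv.2 subset_closure))
        (mem_smul_mul_inv_of_ltrans_ne_zero hΦT hq h)

lemma wnormInf_ltrans_le (hΦ : Continuous Φ) (hΦle : ∀ w, ‖Φ w‖ₑ ≤ 1)
    (hΦT : ∀ w, Φ w ≠ 0 → w ∈ T) (hTo : IsOpen T) (hT : IsCompact (closure T))
    (hQ : IsCompact (closure Q)) {t : Finset G} (hQt : Q ⊆ ⋃ y ∈ t, T * {y}) {C : G → ℝ≥0∞}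
    (hC : ∀ y ∈ t, ∀ F, WnormInf Y T (Rtrans y F) ≤ C y * WnormInf Y T F) (x : G) :
    WnormInf Y Q (Ltrans x Φ) ≤
      (∑ y ∈ t, C y ^ Y.p) ^ (1 / Y.p) * Y.N ((x • (T * T⁻¹)).indicator fun _ => 1) := by
  refine (wnormInf_le_of_subset_iUnion Y (continuous_ltrans hΦ x) (M := 1) (fun _ => hΦle _) hQ
    hTo hQt fun y hy => hC y hy _).trans ?_
  gcongr
  simpa using wnormInf_le_mul_N_indicator Y (measurable_kinf (continuous_ltrans hΦ x) hT)
    (M := 1) (fun _ => hΦle _) fun _ _ hq h => mem_smul_mul_inv_of_ltrans_ne_zero hΦT hq h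

end Bump

theorem Yd_embeds_linfty_weighted_general
    {G : Type*} [Group G] [TopologicalSpace G] [IsTopologicalGroup G]
    [LocallyCompactSpace G] [MeasurableSpace G] [BorelSpace G]
    {μ : Measure G} [μ.IsHaarMeasure] (Y : SolidQF μ)
    (hRTI : WInfRTI Y)
    {ι : Type*} (X : ι → G) (hX : WellSpread X)
    (U : Set G) (hU : IsRCNbhd U) (Q : Set G) (hQ : IsRCNbhd Q) :
    ∃ C : ℝ≥0∞, C ≠ ⊤ ∧ ∀ (lam : ι → ℂ) (i : ι),
      (‖lam i‖₊ : ℝ≥0∞) ≤ C * opEN (Ltrans (X i)⁻¹) (WnormInf Y Q) * YdNorm Y X U lam := by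
  obtain ⟨hQ1, hQc⟩ := hQ
  obtain ⟨T, hTo, hT1, hTc, hTU⟩ := exists_isOpen_one_mem_mul_inv_subset hU.1
  obtain ⟨Φ, hΦc, hΦ1, hΦle, hΦT⟩ := exists_continuous_bump hTo hT1
  obtain ⟨t, ht⟩ := hQc.elim_finite_subcover (fun y : G => T * {y}) (fun _ => hTo.mul_right)
    fun q _ => mem_iUnion.2 ⟨q, by simpa using hT1⟩
  choose C hCtop hC using hRTI T ⟨hTo.mem_nhds hT1, hTc⟩
  have hW0 := wnormInf_ltrans_ne_zero Y hΦc hΦ1 hΦle hQ1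
  have hWtop := wnormInf_ltrans_ne_top Y hΦc hΦle hΦT hTc hQc
  set B := (∑ y ∈ t, C y ^ Y.p) ^ (1 / Y.p)
  set c₀ := WnormInf Y Q Φ
  have hc₀ : c₀ ≠ 0 ∧ c₀ ≠ ⊤ := by simpa using And.intro (hW0 1) (hWtop 1)
  have hB : B ≠ ⊤ := rpow_ne_top_of_nonneg (one_div_pos.2 Y.p_pos).le
    (sum_ne_top.2 fun y _ => rpow_ne_top_of_nonneg Y.p_pos.le (hCtop y))
  refine ⟨c₀⁻¹ * B, mul_ne_top (inv_ne_top.2 hc₀.1) hB, fun lam i => ?_⟩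
  set r := opEN (Ltrans (X i)⁻¹) (WnormInf Y Q)
  have hc₀r : c₀ ≤ r * WnormInf Y Q (Ltrans (X i) Φ) := by
    simpa using le_opEN_mul (T := Ltrans (X i)⁻¹) (hW0 (X i)) (hWtop (X i))
  have hWB := wnormInf_ltrans_le Y hΦc hΦle hΦT hTo hTc hQc (subset_closure.trans ht)
    (fun y _ => hC y) (X i)
  have hYd := enorm_mul_N_indicator_le_ydNorm Y hX.1 hU.2 hTo.mul_right.measurableSet hTU lam i
  set N := Y.N ((X i • (T * T⁻¹)).indicator fun _ => 1)
  have key : ‖lam i‖ₑ * c₀ ≤ r * B * YdNorm Y X U lam := calc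
    ‖lam i‖ₑ * c₀ ≤ ‖lam i‖ₑ * (r * (B * N)) := by gcongr; exact hc₀r.trans (by gcongr)
    _ = r * B * (‖lam i‖ₑ * N) := by ring
    _ ≤ r * B * YdNorm Y X U lam := by gcongr
  calc (‖lam i‖₊ : ℝ≥0∞) ≤ r * B * YdNorm Y X U lam / c₀ :=
        (ENNReal.le_div_iff_mul_le (.inl hc₀.1) (.inl hc₀.2)).2 key
    _ = c₀⁻¹ * B * r * YdNorm Y X U lam := by rw [div_eq_mul_inv]; ring

/-- Assume `W(L^∞,Y)` is right and left translation invariant.  Then for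
every well-spread family `X = (x_i)`, the sequence space `Y_d(X)` embeds continuously into
`ℓ^∞_{1/r}` with `r(i) = |||L_{x_i⁻¹} | W(L^∞,Y)|||`: there is a constant `C` with
`|λ_i| ≤ C · r(i) · ‖(λ_i)|Y_d(X)‖` for all `i` and all `(λ_i) ∈ Y_d(X)`. -/
theorem Yd_embeds_linfty_weighted
    {G : Type*} [Group G] [TopologicalSpace G] [IsTopologicalGroup G]
    [LocallyCompactSpace G] [MeasurableSpace G] [BorelSpace G]
    {μ : Measure G} [μ.IsHaarMeasure] (Y : SolidQF μ)
    (hRTI : WInfRTI Y) (hLTI : WInfLTI Y)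
    {ι : Type*} (X : ι → G) (hX : WellSpread X)
    (U : Set G) (hU : IsRCNbhd U) (Q : Set G) (hQ : IsRCNbhd Q) :
    ∃ C : ℝ≥0∞, C ≠ ⊤ ∧ ∀ (lam : ι → ℂ) (i : ι),
      (‖lam i‖₊ : ℝ≥0∞) ≤ C * opEN (Ltrans (X i)⁻¹) (WnormInf Y Q) * YdNorm Y X U lam :=
  Yd_embeds_linfty_weighted_general Y hRTI X hX U hU Q hQ

end WienerAmalgam
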